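/- arXiv:1607.00419 — 2 statements merged into one kernel-verified Lean document; each statement's English description precedes it below -/
import Mathlib

section
/- Let x satisfy x(n+1) = H(n+1) + ∑_{j=0}^{n} k(n-j) f(x(j)) for n ≥ 0 with x(0) = ξ. If f is continuous and sublinear, k is absolutely summable, and H*(n) := max_{1 ≤ j ≤ n} |H(j)| converges to a finite limit, then x*(n) := max_{0 ≤ j ≤ n} |x(j)| converges to a finite limit. -/
open Filter Finset Topology

/-- Running maximum of `g` over `{1,…,n}` (value `0` when `n = 0`). -/
noncomputable def runMax1 (g : ℕ → ℝ) (n : ℕ) : ℝ :=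
  if h : 1 ≤ n then (Finset.Icc 1 n).sup' (Finset.nonempty_Icc.mpr h) g else 0

/-- Running maximum of `g` over `{0,…,n}`. -/
noncomputable def runMax0 (g : ℕ → ℝ) (n : ℕ) : ℝ :=
  (Finset.Icc 0 n).sup' (Finset.nonempty_Icc.mpr (Nat.zero_le n)) g

/-! Fix `ε > 0` with `ε · ∑|k| ≤ 1/2`. Sublinearity and continuity of `f` give `|f y| ≤ ε|y| + C`,
so if `|x j| ≤ M` for all `j ≤ n` then
`|x (n+1)| ≤ sup |H| + ∑|k| · (ε M + C) ≤ sup |H| + M/2 + C ∑|k|`,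
which is again `≤ M` once `M ≥ 2 (sup |H| + C ∑|k|)`. By strong induction `x` is bounded, and the
running maximum `x*`, being monotone and bounded, converges. -/

theorem le_runMax1 (g : ℕ → ℝ) {j n : ℕ} (hj : 1 ≤ j) (hjn : j ≤ n) : g j ≤ runMax1 g n := by
  rw [runMax1, dif_pos (hj.trans hjn)]
  exact le_sup' g (mem_Icc.2 ⟨hj, hjn⟩)

theorem le_of_tendsto_runMax1 {g : ℕ → ℝ} {L : ℝ} (hL : Tendsto (runMax1 g) atTop (𝓝 L))
    {n : ℕ} (hn : 1 ≤ n) : g n ≤ L :=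
  ge_of_tendsto hL (eventually_atTop.2 ⟨n, fun _ hm => le_runMax1 g hn hm⟩)

theorem runMax0_mono (g : ℕ → ℝ) : Monotone (runMax0 g) := fun _ _ hnm =>
  sup'_le _ _ fun _ hj => le_sup' g (mem_Icc.2 ⟨Nat.zero_le _, (mem_Icc.1 hj).2.trans hnm⟩)

theorem exists_tendsto_runMax0_of_le {g : ℕ → ℝ} {M : ℝ} (hg : ∀ n, g n ≤ M) :
    ∃ M', Tendsto (runMax0 g) atTop (𝓝 M') :=
  ⟨_, tendsto_atTop_ciSup (runMax0_mono g)
    ⟨M, Set.forall_mem_range.2 fun _ => sup'_le _ _ fun j _ => hg j⟩⟩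

theorem exists_abs_le_mul_abs_add_of_tendsto_div {f : ℝ → ℝ} (hf : Continuous f)
    (hsub : Tendsto (fun y => f y / y) (cocompact ℝ) (𝓝 0)) {ε : ℝ} (hε : 0 < ε) :
    ∃ C, ∀ y, |f y| ≤ ε * |y| + C := by
  obtain ⟨t, ht, hft⟩ := mem_cocompact.1 (hsub (Metric.ball_mem_nhds 0 hε))
  -- `0` is added to `t` because `f 0 / 0 = 0` carries no information on `f 0`.
  obtain ⟨C, hC⟩ := (ht.insert 0).exists_bound_of_continuousOn hf.continuousOn
  refine ⟨C, fun y => ?_⟩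
  by_cases hy : y ∈ insert 0 t
  · simpa using (hC y hy).trans (le_add_of_nonneg_left (by positivity))
  · obtain ⟨hy0, hyt⟩ := not_or.1 hy
    have hfy : |f y| / |y| < ε := by
      simpa [Real.dist_eq, abs_div] using hft hyt
    have hC0 : 0 ≤ C := (norm_nonneg _).trans (hC 0 (Set.mem_insert 0 t))
    linarith [(div_lt_iff₀ (abs_pos.2 hy0)).1 hfy]

theorem abs_sum_range_mul_sub_le {k a : ℕ → ℝ} (hk : Summable fun j => |k j|) {n : ℕ} {B : ℝ}
    (ha : ∀ j ≤ n, |a j| ≤ B) :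
    |∑ j ∈ range (n + 1), k (n - j) * a j| ≤ (∑' j, |k j|) * B := by
  have hB : 0 ≤ B := (abs_nonneg _).trans (ha 0 (Nat.zero_le n))
  calc |∑ j ∈ range (n + 1), k (n - j) * a j|
      ≤ ∑ j ∈ range (n + 1), |k (n - j)| * B := by
        refine (abs_sum_le_sum_abs _ _).trans (sum_le_sum fun j hj => ?_)
        rw [abs_mul]
        exact mul_le_mul_of_nonneg_left (ha j (Nat.lt_succ_iff.1 (mem_range.1 hj))) (abs_nonneg _)
    _ = (∑ j ∈ range (n + 1), |k j|) * B := by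
        rw [← sum_mul, ← sum_range_reflect (fun j => |k j|) (n + 1)]
        simp
    _ ≤ (∑' j, |k j|) * B :=
        mul_le_mul_of_nonneg_right (hk.sum_le_tsum _ fun j _ => abs_nonneg _) hB

theorem abs_le_of_volterra {f : ℝ → ℝ} {k H x : ℕ → ℝ} {ε C L M : ℝ}
    (hk : Summable fun j => |k j|) (hε : 0 ≤ ε) (hf : ∀ y, |f y| ≤ ε * |y| + C)
    (hH : ∀ n, |H (n + 1)| ≤ L)
    (hx : ∀ n, x (n + 1) = H (n + 1) + ∑ j ∈ range (n + 1), k (n - j) * f (x j))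
    (hx0 : |x 0| ≤ M) (hM : L + (∑' j, |k j|) * (ε * M + C) ≤ M) (n : ℕ) : |x n| ≤ M := by
  induction n using Nat.strong_induction_on with
  | _ n ih =>
    rcases n with _ | m
    · exact hx0
    have hfx : ∀ j ≤ m, |f (x j)| ≤ ε * M + C := fun j hj =>
      (hf _).trans (by gcongr; exact ih j (Nat.lt_succ_of_le hj))
    calc |x (m + 1)|
        ≤ |H (m + 1)| + |∑ j ∈ range (m + 1), k (m - j) * f (x j)| := hx m ▸ abs_add_le _ _
      _ ≤ L + (∑' j, |k j|) * (ε * M + C) := add_le_add (hH m) (abs_sum_range_mul_sub_le hk hfx)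
      _ ≤ M := hM

theorem stmt1_general
(f : ℝ → ℝ) (k H x : ℕ → ℝ)
    (hf : Continuous f)
    (hsub : Filter.Tendsto (fun y => f y / y) (Filter.cocompact ℝ) (nhds 0))
    (hk : Summable (fun j => |k j|))
    (hx : ∀ n : ℕ, x (n + 1) = H (n + 1) + ∑ j ∈ Finset.range (n + 1), k (n - j) * f (x j))
    (hH : ∃ L : ℝ, Filter.Tendsto (fun n => runMax1 (fun j => |H j|) n) Filter.atTop (nhds L)) :
    ∃ M : ℝ, Filter.Tendsto (fun n => runMax0 (fun j => |x j|) n) Filter.atTop (nhds M) := by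
  obtain ⟨L, hL⟩ := hH
  set K := ∑' j, |k j|
  have hK : 0 ≤ K := tsum_nonneg fun j => abs_nonneg _
  set ε := 1 / (2 * (K + 1))
  have hεK : K * ε ≤ 1 / 2 := by
    rw [mul_one_div, div_le_div_iff₀ (by positivity) two_pos]
    linarith
  obtain ⟨C, hC⟩ := exists_abs_le_mul_abs_add_of_tendsto_div hf hsub (by positivity : 0 < ε)
  set M := max |x 0| (2 * (L + K * C))
  have hM : L + K * (ε * M + C) ≤ M := by
    have hM0 : 0 ≤ M := (abs_nonneg _).trans (le_max_left _ _)
    nlinarith [le_max_right |x 0| (2 * (L + K * C))]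
  exact exists_tendsto_runMax0_of_le <| abs_le_of_volterra hk (by positivity) hC
    (fun n => le_of_tendsto_runMax1 hL n.succ_pos) hx (le_max_left _ _) hM

theorem stmt1
(f : ℝ → ℝ) (k H x : ℕ → ℝ) (ξ : ℝ)
    (hf : Continuous f)
    (hsub : Filter.Tendsto (fun y => f y / y) (Filter.cocompact ℝ) (nhds 0))
    (hk : Summable (fun j => |k j|))
    (hx0 : x 0 = ξ)
    (hx : ∀ n : ℕ, x (n + 1) = H (n + 1) + ∑ j ∈ Finset.range (n + 1), k (n - j) * f (x j))
    (hH : ∃ L : ℝ, Filter.Tendsto (fun n => runMax1 (fun j => |H j|) n) Filter.atTop (nhds L)) :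
    ∃ M : ℝ, Filter.Tendsto (fun n => runMax0 (fun j => |x j|) n) Filter.atTop (nhds M) :=
  stmt1_general f k H x hf hsub hk hx hH
end

section
/- Under the Volterra equation hypotheses, if there exist increasing sequences a₊(n), a₋(n) → ∞ with limsup |H(n)|/a₊(n) = 0 and limsup |H(n)|/a₋(n) = +∞, then limsup |x(n)|/a₊(n) = 0 and limsup |x(n)|/a₋(n) = +∞. -/
/-!
The memory term `T n = ∑_{j ≤ n} k (n - j) f (x j)` satisfies `x (n + 1) = H (n + 1) + T n`.
Since `f` is sublinear, `|f y| ≤ ε |y| + C_ε` for every `ε > 0`, and since `k` is absolutely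
summable, `|T n| ≤ ‖k‖₁ (ε max_{j ≤ n} |x j| + C_ε)`. Taking `ε ‖k‖₁ ≤ 1/2`, an induction shows
that `H = O(a)` forces `x = O(a)` for every increasing positive `a`. Once `x = O(a)`, the same
estimate gives `|T n| ≤ ε a (n + 1) + C_ε` for every `ε`, so `T = O(a)`, and `T = o(a)` when
`a → ∞`. Hence `H = o(a₊)` gives `x = H + T = o(a₊)`, while `x = O(a₋)` would give
`H = x - T = O(a₋)`.
-/

open Filter Finset Topology

open Asymptotics

theorem exists_abs_le_mul_abs_add {f : ℝ → ℝ} (hf : Continuous f)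
    (hsub : Tendsto (fun y => f y / y) (cocompact ℝ) (𝓝 0)) {ε : ℝ} (hε : 0 < ε) :
    ∃ C, 0 ≤ C ∧ ∀ y, |f y| ≤ ε * |y| + C := by
  have hlarge : ∀ᶠ y in cocompact ℝ, |f y| ≤ ε * |y| := by
    filter_upwards [Metric.tendsto_nhds.mp hsub ε hε,
      (isCompact_singleton (x := (0 : ℝ))).compl_mem_cocompact] with y hy hy0
    rw [Real.dist_eq, sub_zero, abs_div] at hy
    exact ((div_lt_iff₀ (abs_pos.mpr hy0)).mp hy).le
  obtain ⟨t, ht, htc⟩ := mem_cocompact.mp hlarge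
  obtain ⟨C, hC⟩ := ht.exists_bound_of_continuousOn hf.continuousOn
  refine ⟨max C 0, le_max_right _ _, fun y => ?_⟩
  have hεy : 0 ≤ ε * |y| := by positivity
  by_cases hy : y ∈ t
  · have hfy : |f y| ≤ C := hC y hy
    linarith [le_max_left C 0]
  · have hfy : |f y| ≤ ε * |y| := htc hy
    linarith [le_max_right C 0]

theorem sum_range_abs_sub_le_tsum {k : ℕ → ℝ} (hk : Summable fun j => |k j|) (n : ℕ) :
    ∑ j ∈ range (n + 1), |k (n - j)| ≤ ∑' j, |k j| := by
  have hreflect := sum_range_reflect (fun j => |k j|) (n + 1)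
  simp only [Nat.add_sub_cancel] at hreflect
  rw [hreflect]
  exact hk.sum_le_tsum _ fun j _ => abs_nonneg _

theorem exists_forall_abs_le_mul_of_isBigO {u a : ℕ → ℝ} (ha : ∀ n, 0 < a n)
    (h : u =O[atTop] a) : ∃ B, 0 ≤ B ∧ ∀ n, |u n| ≤ B * a n := by
  obtain ⟨B, hB, hbound⟩ := bound_of_isBigO_nat_atTop h
  refine ⟨B, hB.le, fun n => ?_⟩
  simpa only [Real.norm_eq_abs, abs_of_pos (ha n)] using hbound (ha n).ne'

theorem isLittleO_of_forall_abs_le_mul_add {α : Type*} {l : Filter α} {u a : α → ℝ}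
    (ha : Tendsto a l atTop) (h : ∀ ε > 0, ∃ C, ∀ n, |u n| ≤ ε * a n + C) : u =o[l] a := by
  refine isLittleO_iff.mpr fun ε hε => ?_
  obtain ⟨C, hC⟩ := h (ε / 2) (half_pos hε)
  filter_upwards [ha.eventually_ge_atTop (2 * C / ε), ha.eventually_ge_atTop 0] with n hn hn0
  rw [Real.norm_eq_abs, Real.norm_eq_abs, abs_of_nonneg hn0]
  have hCa : 2 * C ≤ ε * a n := by rwa [div_le_iff₀' hε] at hn
  linarith [hC n]

theorem isBigO_of_forall_abs_le_add {u a : ℕ → ℝ} (ha_mono : Monotone a) (ha_pos : 0 < a 0)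
    {C : ℝ} (h : ∀ n, |u n| ≤ a n + C) : u =O[atTop] a := by
  refine IsBigO.of_bound (1 + |C| / a 0) (Eventually.of_forall fun n => ?_)
  have ha0n : a 0 ≤ a n := ha_mono n.zero_le
  have hC : |C| ≤ |C| / a 0 * a n := by
    rw [div_mul_eq_mul_div, le_div_iff₀ ha_pos]
    exact mul_le_mul_of_nonneg_left ha0n (abs_nonneg C)
  rw [Real.norm_eq_abs, Real.norm_eq_abs, abs_of_pos (ha_pos.trans_le ha0n)]
  linarith [h n, le_abs_self C]

theorem isBigO_comp_add_one_iff {E F : Type*} [Norm E] [Norm F] {u : ℕ → E} {a : ℕ → F} :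
    (fun n => u (n + 1)) =O[atTop] (fun n => a (n + 1)) ↔ u =O[atTop] a := by
  conv_rhs => rw [← map_add_atTop_eq_nat 1]
  rw [isBigO_map]
  rfl

theorem isLittleO_comp_add_one_iff {E F : Type*} [Norm E] [Norm F] {u : ℕ → E} {a : ℕ → F} :
    (fun n => u (n + 1)) =o[atTop] (fun n => a (n + 1)) ↔ u =o[atTop] a := by
  conv_rhs => rw [← map_add_atTop_eq_nat 1]
  rw [isLittleO_map]
  rfl

theorem limsup_abs_div_eq_zero_iff {α : Type*} {l : Filter α} [l.NeBot] {u a : α → ℝ}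
    (ha : ∀ n, 0 < a n) :
    limsup (fun n => ((|u n| / a n : ℝ) : EReal)) l = 0 ↔ u =o[l] a := by
  constructor
  · refine fun h => isLittleO_iff.mpr fun c hc => ?_
    have hlt : limsup (fun n => ((|u n| / a n : ℝ) : EReal)) l < c := by
      rw [h]; exact_mod_cast hc
    filter_upwards [eventually_lt_of_limsup_lt hlt] with n hn
    rw [Real.norm_eq_abs, Real.norm_eq_abs, abs_of_pos (ha n)]
    exact ((div_lt_iff₀ (ha n)).mp (EReal.coe_lt_coe_iff.mp hn)).le
  · intro h
    have hdiv : Tendsto (fun n => |u n| / a n) l (𝓝 0) := by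
      simpa only [abs_div, abs_of_pos (ha _), abs_zero] using h.tendsto_div_nhds_zero.abs
    exact_mod_cast (EReal.tendsto_coe.mpr hdiv).limsup_eq

theorem limsup_abs_div_eq_top_iff {α : Type*} {l : Filter α} {u a : α → ℝ}
    (ha : ∀ n, 0 < a n) :
    limsup (fun n => ((|u n| / a n : ℝ) : EReal)) l = ⊤ ↔ ¬ u =O[l] a := by
  rw [← not_lt_top_iff, not_iff_not]
  constructor
  · intro h
    obtain ⟨c, hc, -⟩ := EReal.exists_between_coe_real h
    refine IsBigO.of_bound c ?_
    filter_upwards [eventually_lt_of_limsup_lt hc] with n hn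
    rw [Real.norm_eq_abs, Real.norm_eq_abs, abs_of_pos (ha n)]
    exact ((div_lt_iff₀ (ha n)).mp (EReal.coe_lt_coe_iff.mp hn)).le
  · intro h
    obtain ⟨c, hc⟩ := h.bound
    refine lt_of_le_of_lt (limsup_le_of_le (by isBoundedDefault) ?_) (EReal.coe_lt_top c)
    filter_upwards [hc] with n hn
    rw [Real.norm_eq_abs, Real.norm_eq_abs, abs_of_pos (ha n)] at hn
    exact EReal.coe_le_coe_iff.mpr ((div_le_iff₀ (ha n)).mpr hn)

namespace Volterra

def memory (k : ℕ → ℝ) (f : ℝ → ℝ) (x : ℕ → ℝ) (n : ℕ) : ℝ :=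
  ∑ j ∈ range (n + 1), k (n - j) * f (x j)

variable {f : ℝ → ℝ} {k H x a : ℕ → ℝ}

theorem abs_memory_le (hk : Summable fun j => |k j|) {ε C M : ℝ} (hε : 0 ≤ ε)
    (hfC : ∀ y, |f y| ≤ ε * |y| + C) {n : ℕ} (hxM : ∀ j ≤ n, |x j| ≤ M) :
    |memory k f x n| ≤ (∑' j, |k j|) * (ε * M + C) := by
  have hfM : ∀ j ≤ n, |f (x j)| ≤ ε * M + C := fun j hj =>
    (hfC _).trans (by gcongr; exact hxM j hj)
  calc |memory k f x n| ≤ ∑ j ∈ range (n + 1), |k (n - j)| * (ε * M + C) := by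
        refine (abs_sum_le_sum_abs _ _).trans (sum_le_sum fun j hj => ?_)
        rw [abs_mul]
        exact mul_le_mul_of_nonneg_left (hfM j (Nat.lt_succ_iff.mp (mem_range.mp hj)))
          (abs_nonneg _)
    _ ≤ (∑' j, |k j|) * (ε * M + C) := by
        rw [← sum_mul]
        exact mul_le_mul_of_nonneg_right (sum_range_abs_sub_le_tsum hk n)
          ((abs_nonneg _).trans (hfM 0 n.zero_le))

theorem abs_memory_le_mul_add (hf : Continuous f)
    (hsub : Tendsto (fun y => f y / y) (cocompact ℝ) (𝓝 0)) (hk : Summable fun j => |k j|)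
    (ha_mono : Monotone a) (ha_pos : ∀ n, 0 < a n) (hxa : x =O[atTop] a) {ε : ℝ} (hε : 0 < ε) :
    ∃ C, ∀ n, |memory k f x n| ≤ ε * a (n + 1) + C := by
  obtain ⟨B, hB, hxB⟩ := exists_forall_abs_le_mul_of_isBigO ha_pos hxa
  set K := ∑' j, |k j|
  have hK : 0 ≤ K := tsum_nonneg fun _ => abs_nonneg _
  obtain ⟨C, -, hfC⟩ := exists_abs_le_mul_abs_add hf hsub (ε := ε / (K * B + 1)) (by positivity)
  refine ⟨K * C, fun n => ?_⟩
  have hxM : ∀ j ≤ n, |x j| ≤ B * a (n + 1) := fun j hj =>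
    (hxB j).trans (mul_le_mul_of_nonneg_left (ha_mono (by omega)) hB)
  have hratio : K * B / (K * B + 1) ≤ 1 := (div_le_one (by positivity)).mpr (by linarith)
  calc |memory k f x n| ≤ K * (ε / (K * B + 1) * (B * a (n + 1)) + C) :=
        abs_memory_le hk (by positivity) hfC hxM
    _ = K * B / (K * B + 1) * (ε * a (n + 1)) + K * C := by ring
    _ ≤ ε * a (n + 1) + K * C :=
        add_le_add_left (mul_le_of_le_one_left (mul_nonneg hε.le (ha_pos _).le) hratio) _

theorem isBigO_of_isBigO_forcing (hf : Continuous f)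
    (hsub : Tendsto (fun y => f y / y) (cocompact ℝ) (𝓝 0)) (hk : Summable fun j => |k j|)
    (hx : ∀ n, x (n + 1) = H (n + 1) + memory k f x n)
    (ha_mono : Monotone a) (ha_pos : ∀ n, 0 < a n) (hH : H =O[atTop] a) : x =O[atTop] a := by
  obtain ⟨c, -, hHc⟩ := exists_forall_abs_le_mul_of_isBigO ha_pos hH
  set K := ∑' j, |k j|
  have hK : 0 ≤ K := tsum_nonneg fun _ => abs_nonneg _
  set ε := 1 / (2 * (K + 1))
  have hεK : ε * K ≤ 1 / 2 := by
    rw [div_mul_eq_mul_div, one_mul, div_le_div_iff₀ (by positivity) two_pos]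
    linarith
  obtain ⟨C, hC, hfC⟩ := exists_abs_le_mul_abs_add hf hsub (ε := ε) (by positivity)
  set B := max (|x 0| / a 0) (2 * (c + K * C / a 0))
  have hB : 0 ≤ B := (div_nonneg (abs_nonneg _) (ha_pos 0).le).trans (le_max_left _ _)
  suffices hxB : ∀ n, |x n| ≤ B * a n by
    refine IsBigO.of_bound B (Eventually.of_forall fun n => ?_)
    simpa only [Real.norm_eq_abs, abs_of_pos (ha_pos n)] using hxB n
  intro n
  induction n using Nat.strong_induction_on with
  | _ n ih =>
  rcases n with _ | m
  · exact (div_le_iff₀ (ha_pos 0)).mp (le_max_left _ _)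
  have hmemory := abs_memory_le hk (by positivity) hfC (n := m) (M := B * a (m + 1)) fun j hj =>
    (ih j (by omega)).trans (mul_le_mul_of_nonneg_left (ha_mono (by omega)) hB)
  have hKC : K * C ≤ K * C / a 0 * a (m + 1) := by
    rw [div_mul_eq_mul_div, le_div_iff₀ (ha_pos 0)]
    exact mul_le_mul_of_nonneg_left (ha_mono (Nat.zero_le _)) (mul_nonneg hK hC)
  have hBa : (c + K * C / a 0) * a (m + 1) ≤ B / 2 * a (m + 1) :=
    mul_le_mul_of_nonneg_right (by linarith [le_max_right (|x 0| / a 0) (2 * (c + K * C / a 0))])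
      (ha_pos _).le
  have hεKB : K * (ε * (B * a (m + 1))) ≤ 1 / 2 * (B * a (m + 1)) := by
    rw [← mul_assoc, mul_comm K]
    exact mul_le_mul_of_nonneg_right hεK (mul_nonneg hB (ha_pos _).le)
  calc |x (m + 1)| ≤ |H (m + 1)| + |memory k f x m| := by rw [hx m]; exact abs_add_le _ _
    _ ≤ c * a (m + 1) + K * (ε * (B * a (m + 1)) + C) := add_le_add (hHc _) hmemory
    _ ≤ B * a (m + 1) := by linarith

theorem isLittleO_of_isLittleO_forcing (hf : Continuous f)
    (hsub : Tendsto (fun y => f y / y) (cocompact ℝ) (𝓝 0)) (hk : Summable fun j => |k j|)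
    (hx : ∀ n, x (n + 1) = H (n + 1) + memory k f x n)
    (ha_mono : Monotone a) (ha_pos : ∀ n, 0 < a n) (ha_top : Tendsto a atTop atTop)
    (hH : H =o[atTop] a) : x =o[atTop] a := by
  have hxa := isBigO_of_isBigO_forcing hf hsub hk hx ha_mono ha_pos hH.isBigO
  have hmemory : memory k f x =o[atTop] fun n => a (n + 1) :=
    isLittleO_of_forall_abs_le_mul_add (ha_top.comp (tendsto_add_atTop_nat 1)) fun ε hε =>
      abs_memory_le_mul_add hf hsub hk ha_mono ha_pos hxa hε
  rw [← isLittleO_comp_add_one_iff]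
  exact ((isLittleO_comp_add_one_iff.mpr hH).add hmemory).congr_left fun n => (hx n).symm

theorem isBigO_forcing_of_isBigO (hf : Continuous f)
    (hsub : Tendsto (fun y => f y / y) (cocompact ℝ) (𝓝 0)) (hk : Summable fun j => |k j|)
    (hx : ∀ n, x (n + 1) = H (n + 1) + memory k f x n)
    (ha_mono : Monotone a) (ha_pos : ∀ n, 0 < a n) (hxa : x =O[atTop] a) : H =O[atTop] a := by
  obtain ⟨C, hC⟩ := abs_memory_le_mul_add hf hsub hk ha_mono ha_pos hxa one_pos
  have hmemory : memory k f x =O[atTop] fun n => a (n + 1) :=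
    isBigO_of_forall_abs_le_add (fun m n h => ha_mono (by omega)) (ha_pos 1)
      (by simpa only [one_mul] using hC)
  rw [← isBigO_comp_add_one_iff]
  exact ((isBigO_comp_add_one_iff.mpr hxa).sub hmemory).congr_left fun n => by rw [hx n]; ring

end Volterra

theorem stmt13_general
(f : ℝ → ℝ) (k H x : ℕ → ℝ)
    (hf : Continuous f)
    (hsub : Filter.Tendsto (fun y => f y / y) (Filter.cocompact ℝ) (nhds 0))
    (hk : Summable (fun j => |k j|))
    (hx : ∀ n : ℕ, x (n + 1) = H (n + 1) + ∑ j ∈ Finset.range (n + 1), k (n - j) * f (x j))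
    (ap am : ℕ → ℝ)
    (hpmono : Monotone ap) (hppos : ∀ n, 0 < ap n)
    (hptop : Filter.Tendsto ap Filter.atTop Filter.atTop)
    (hmmono : Monotone am) (hmpos : ∀ n, 0 < am n)
    (hHp : Filter.limsup (fun n => ((|H n| / ap n : ℝ) : EReal)) Filter.atTop = 0)
    (hHm : Filter.limsup (fun n => ((|H n| / am n : ℝ) : EReal)) Filter.atTop = ⊤) :
    Filter.limsup (fun n => ((|x n| / ap n : ℝ) : EReal)) Filter.atTop = 0 ∧
      Filter.limsup (fun n => ((|x n| / am n : ℝ) : EReal)) Filter.atTop = ⊤ := by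
  rw [limsup_abs_div_eq_zero_iff hppos] at hHp ⊢
  rw [limsup_abs_div_eq_top_iff hmpos] at hHm ⊢
  exact ⟨Volterra.isLittleO_of_isLittleO_forcing hf hsub hk hx hpmono hppos hptop hHp,
    fun hxm => hHm (Volterra.isBigO_forcing_of_isBigO hf hsub hk hx hmmono hmpos hxm)⟩

theorem stmt13
(f : ℝ → ℝ) (k H x : ℕ → ℝ) (ξ : ℝ)
    (hf : Continuous f)
    (hsub : Filter.Tendsto (fun y => f y / y) (Filter.cocompact ℝ) (nhds 0))
    (hk : Summable (fun j => |k j|))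
    (hx0 : x 0 = ξ)
    (hx : ∀ n : ℕ, x (n + 1) = H (n + 1) + ∑ j ∈ Finset.range (n + 1), k (n - j) * f (x j))
    (ap am : ℕ → ℝ)
    (hpmono : Monotone ap) (hppos : ∀ n, 0 < ap n)
    (hptop : Filter.Tendsto ap Filter.atTop Filter.atTop)
    (hmmono : Monotone am) (hmpos : ∀ n, 0 < am n)
    (hmtop : Filter.Tendsto am Filter.atTop Filter.atTop)
    (hHp : Filter.limsup (fun n => ((|H n| / ap n : ℝ) : EReal)) Filter.atTop = 0)
    (hHm : Filter.limsup (fun n => ((|H n| / am n : ℝ) : EReal)) Filter.atTop = ⊤) :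
    Filter.limsup (fun n => ((|x n| / ap n : ℝ) : EReal)) Filter.atTop = 0 ∧
      Filter.limsup (fun n => ((|x n| / am n : ℝ) : EReal)) Filter.atTop = ⊤ :=
  stmt13_general f k H x hf hsub hk hx ap am hpmono hppos hptop hmmono hmpos hHp hHm
end
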